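/- If V̄ is K-Lipschitz-valued, then ∫ |V(s) − V̄(φ(s))| dξ(s) ≤ (L_R + γ K L_P)/(1−γ). -/

import Mathlib

/-!
Subtracting the two Bellman equations, the error `e s = |V s - Vb (φ s)|` satisfies
`e s ≤ |r s - rb (φ s)| + γ K · TV(φ∗P(·|s), P̄(φ s)) + γ ∫ e dP(·|s)`: the difference of the
expected next values splits into `∫ (V - Vb ∘ φ) dP(·|s)` and the difference of the integrals of
`Vb` against the two latent distributions, and integrals of a function of oscillation at most `K`
against two probability measures differ by at most `K` times their total variation.
Integrating against the invariant `ξ` turns `∫∫ e dP(·|s) dξ` back into `∫ e dξ`, and solving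
for `∫ e dξ` gives the bound.
-/

open MeasureTheory ProbabilityTheory

/-- Total variation distance between two measures on `X`:
the supremum over measurable sets of the absolute difference of their masses. -/
noncomputable def tvDist {X : Type*} [MeasurableSpace X] (μ ν : Measure X) : ℝ :=
  ⨆ A : {A : Set X // MeasurableSet A}, |(μ A.1).toReal - (ν A.1).toReal|

section TotalVariation

variable {X : Type*} [MeasurableSpace X]

lemma tvDist_comm (μ ν : Measure X) : tvDist μ ν = tvDist ν μ := by
  simp only [tvDist, abs_sub_comm]

lemma tvDist_nonneg (μ ν : Measure X) : 0 ≤ tvDist μ ν :=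
  Real.iSup_nonneg fun _ => abs_nonneg _

lemma abs_measureReal_sub_le_one (μ ν : Measure X) [IsProbabilityMeasure μ]
    [IsProbabilityMeasure ν] (A : Set X) : |μ.real A - ν.real A| ≤ 1 :=
  abs_sub_le_of_nonneg_of_le measureReal_nonneg measureReal_le_one measureReal_nonneg
    measureReal_le_one

lemma tvDist_le_one (μ ν : Measure X) [IsProbabilityMeasure μ] [IsProbabilityMeasure ν] :
    tvDist μ ν ≤ 1 :=
  Real.iSup_le (fun A => abs_measureReal_sub_le_one μ ν A.1) zero_le_one

lemma abs_measureReal_sub_le_tvDist (μ ν : Measure X) [IsProbabilityMeasure μ]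
    [IsProbabilityMeasure ν] {A : Set X} (hA : MeasurableSet A) :
    |μ.real A - ν.real A| ≤ tvDist μ ν :=
  le_ciSup (f := fun A : {A : Set X // MeasurableSet A} => |μ.real A.1 - ν.real A.1|)
    ⟨1, by rintro _ ⟨A, rfl⟩; exact abs_measureReal_sub_le_one μ ν A.1⟩ ⟨A, hA⟩

lemma Measurable.tvDist [Finite X] {S : Type*} [MeasurableSpace S] {μ ν : S → Measure X}
    (hμ : Measurable μ) (hν : Measurable ν) : Measurable fun s => tvDist (μ s) (ν s) :=
  Measurable.iSup fun A =>
    (((Measure.measurable_coe A.2).comp hμ).ennreal_toReal.sub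
      ((Measure.measurable_coe A.2).comp hν).ennreal_toReal).abs

lemma integrable_tvDist [Finite X] {S : Type*} [MeasurableSpace S] {ξ : Measure S}
    [IsFiniteMeasure ξ] {μ ν : S → Measure X} [∀ s, IsProbabilityMeasure (μ s)]
    [∀ s, IsProbabilityMeasure (ν s)] (hμ : Measurable μ) (hν : Measurable ν) :
    Integrable (fun s => tvDist (μ s) (ν s)) ξ :=
  .of_bound (hμ.tvDist hν).aestronglyMeasurable 1 (ae_of_all _ fun s => by
    rw [Real.norm_of_nonneg (tvDist_nonneg _ _)]
    exact tvDist_le_one _ _)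

variable [Fintype X] [MeasurableSingletonClass X]

lemma integral_sub_integral_le_mul_tvDist_of_nonneg_of_le (μ ν : Measure X)
    [IsProbabilityMeasure μ] [IsProbabilityMeasure ν] {g : X → ℝ} {K : ℝ}
    (hg0 : ∀ x, 0 ≤ g x) (hgK : ∀ x, g x ≤ K) :
    ∫ x, g x ∂μ - ∫ x, g x ∂ν ≤ K * tvDist μ ν := by
  classical
  have := nonempty_of_isProbabilityMeasure μ
  have hK : 0 ≤ K := (hg0 (Classical.arbitrary X)).trans (hgK _)
  set d : X → ℝ := fun x => μ.real {x} - ν.real {x}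
  set A := Finset.univ.filter fun x => 0 ≤ d x
  calc ∫ x, g x ∂μ - ∫ x, g x ∂ν = ∑ x, d x * g x := by
        simp [d, integral_fintype, sub_mul, Finset.sum_sub_distrib]
    _ ≤ ∑ x ∈ A, d x * g x := by
        rw [← Finset.sum_filter_add_sum_filter_not Finset.univ (fun x => 0 ≤ d x)]
        refine add_le_of_nonpos_right (Finset.sum_nonpos fun x hx => ?_)
        exact mul_nonpos_of_nonpos_of_nonneg (not_le.1 (Finset.mem_filter.1 hx).2).le (hg0 x)
    _ ≤ ∑ x ∈ A, d x * K :=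
        Finset.sum_le_sum fun x hx => mul_le_mul_of_nonneg_left (hgK x) (Finset.mem_filter.1 hx).2
    _ = K * (μ.real A - ν.real A) := by
        rw [← Finset.sum_mul, Finset.sum_sub_distrib, sum_measureReal_singleton,
          sum_measureReal_singleton, mul_comm]
    _ ≤ K * tvDist μ ν :=
        mul_le_mul_of_nonneg_left ((le_abs_self _).trans
          (abs_measureReal_sub_le_tvDist μ ν A.finite_toSet.measurableSet)) hK

lemma abs_integral_sub_integral_le_mul_tvDist (μ ν : Measure X) [IsProbabilityMeasure μ]
    [IsProbabilityMeasure ν] {f : X → ℝ} {K : ℝ} (hK : ∀ x y, |f x - f y| ≤ K) :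
    |∫ x, f x ∂μ - ∫ x, f x ∂ν| ≤ K * tvDist μ ν := by
  have := nonempty_of_isProbabilityMeasure μ
  obtain ⟨x₀, hx₀⟩ := Finite.exists_min f
  -- Shifting `f` by its minimum makes it take values in `[0, K]`.
  have key (μ ν : Measure X) [IsProbabilityMeasure μ] [IsProbabilityMeasure ν] :
      ∫ x, f x ∂μ - ∫ x, f x ∂ν ≤ K * tvDist μ ν := by
    have hshift : ∫ x, f x ∂μ - ∫ x, f x ∂ν
        = ∫ x, (f x - f x₀) ∂μ - ∫ x, (f x - f x₀) ∂ν := by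
      simp [integral_sub Integrable.of_finite (integrable_const _)]
    rw [hshift]
    exact integral_sub_integral_le_mul_tvDist_of_nonneg_of_le μ ν
      (fun x => sub_nonneg.2 (hx₀ x)) (fun x => (le_abs_self _).trans (hK x x₀))
  rw [abs_sub_le_iff, tvDist_comm μ ν]
  exact ⟨tvDist_comm μ ν ▸ key μ ν, key ν μ⟩

end TotalVariation

lemma abs_integral_sub_integral_le_integral_abs_sub_add_mul_tvDist {S X : Type*}
    [MeasurableSpace S] [MeasurableSpace X] [Fintype X] [MeasurableSingletonClass X]
    (μ : Measure S) [IsProbabilityMeasure μ] (ν : Measure X) [IsProbabilityMeasure ν]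
    {φ : S → X} (hφ : Measurable φ) {f : S → ℝ} (hf : Integrable f μ) {g : X → ℝ} {K : ℝ}
    (hK : ∀ x y, |g x - g y| ≤ K) :
    |∫ s, f s ∂μ - ∫ x, g x ∂ν| ≤ ∫ s, |f s - g (φ s)| ∂μ + K * tvDist (μ.map φ) ν := by
  have := Measure.isProbabilityMeasure_map (μ := μ) hφ.aemeasurable
  have hgφ : Integrable (fun s => g (φ s)) μ := Integrable.of_finite.comp_measurable hφ
  have hsplit : ∫ s, f s ∂μ - ∫ x, g x ∂ν
      = ∫ s, (f s - g (φ s)) ∂μ + (∫ x, g x ∂(μ.map φ) - ∫ x, g x ∂ν) := by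
    rw [integral_sub hf hgφ, integral_map hφ.aemeasurable .of_discrete]
    ring
  rw [hsplit]
  exact (abs_add_le _ _).trans
    (add_le_add (abs_integral_le_integral_abs) (abs_integral_sub_integral_le_mul_tvDist _ _ hK))

lemma abs_add_mul_integral_sub_add_mul_integral_le {S X : Type*}
    [MeasurableSpace S] [MeasurableSpace X] [Fintype X] [MeasurableSingletonClass X]
    (μ : Measure S) [IsProbabilityMeasure μ] (ν : Measure X) [IsProbabilityMeasure ν]
    {φ : S → X} (hφ : Measurable φ) {f : S → ℝ} (hf : Integrable f μ) {g : X → ℝ} {K : ℝ}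
    (hK : ∀ x y, |g x - g y| ≤ K) {γ : ℝ} (hγ : 0 ≤ γ) (a b : ℝ) :
    |a + γ * ∫ s, f s ∂μ - (b + γ * ∫ x, g x ∂ν)|
      ≤ |a - b| + γ * K * tvDist (μ.map φ) ν + γ * ∫ s, |f s - g (φ s)| ∂μ := by
  have h := mul_le_mul_of_nonneg_left
    (abs_integral_sub_integral_le_integral_abs_sub_add_mul_tvDist μ ν hφ hf hK) hγ
  calc |a + γ * ∫ s, f s ∂μ - (b + γ * ∫ x, g x ∂ν)|
      = |(a - b) + γ * (∫ s, f s ∂μ - ∫ x, g x ∂ν)| := by congr 1; ring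
    _ ≤ |a - b| + γ * |∫ s, f s ∂μ - ∫ x, g x ∂ν| :=
        (abs_add_le _ _).trans_eq (by rw [abs_mul, abs_of_nonneg hγ])
    _ ≤ _ := by linarith

namespace ProbabilityTheory.Kernel.Invariant

variable {S : Type*} [MeasurableSpace S] {κ : Kernel S S} {ξ : Measure S} {g : S → ℝ}

lemma integrable_integral (hξ : κ.Invariant ξ) (hg : Integrable g ξ) :
    Integrable (fun s => ∫ x, g x ∂κ s) ξ := by
  rw [← hξ.def, Measure.comp_eq_comp_const_apply] at hg
  simpa using hg.integral_comp

lemma integral_integral (hξ : κ.Invariant ξ) (hg : Integrable g ξ) :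
    ∫ s, ∫ x, g x ∂κ s ∂ξ = ∫ s, g s ∂ξ := by
  rw [← hξ.def, Measure.comp_eq_comp_const_apply] at hg
  have h := integral_comp hg
  simp only [Kernel.const_apply, ← Measure.comp_eq_comp_const_apply, hξ.def] at h
  exact h.symm

lemma integral_le_div_one_sub (hξ : κ.Invariant ξ) {γ : ℝ} (hγ : γ < 1) {h : S → ℝ}
    (hg : Integrable g ξ) (hh : Integrable h ξ) (hle : ∀ s, g s ≤ h s + γ * ∫ x, g x ∂κ s) :
    ∫ s, g s ∂ξ ≤ (∫ s, h s ∂ξ) / (1 - γ) := by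
  have hPg := (hξ.integrable_integral hg).const_mul γ
  have hint : ∫ s, g s ∂ξ ≤ ∫ s, h s ∂ξ + γ * ∫ s, g s ∂ξ :=
    calc ∫ s, g s ∂ξ ≤ ∫ s, (h s + γ * ∫ x, g x ∂κ s) ∂ξ := integral_mono hg (hh.add hPg) hle
      _ = ∫ s, h s ∂ξ + γ * ∫ s, g s ∂ξ := by
        rw [integral_add hh hPg, integral_const_mul, hξ.integral_integral hg]
  rw [le_div_iff₀ (sub_pos.2 hγ)]
  linarith

end ProbabilityTheory.Kernel.Invariant

theorem value_difference_return_general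
    {S : Type*} [MeasurableSpace S]
    {Sb : Type*} [Fintype Sb] [MeasurableSpace Sb] [DiscreteMeasurableSpace Sb]
    (P : Kernel S S) [IsMarkovKernel P]
    (Pb : Sb → PMF Sb)
    (φ : S → Sb) (hφ : Measurable φ)
    (ξ : Measure S) [IsProbabilityMeasure ξ]
    (hinv : ∀ A : Set S, MeasurableSet A → ξ A = ∫⁻ s, P s A ∂ξ)
    (γ : ℝ) (hγ0 : 0 ≤ γ) (hγ1 : γ < 1)
    (r : S → ℝ) (hrmeas : Measurable r) (hrbdd : ∃ C, ∀ s, |r s| ≤ C)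
    (rb : Sb → ℝ)
    (V : S → ℝ) (hVmeas : Measurable V) (hVbdd : ∃ C, ∀ s, |V s| ≤ C)
    (hVbellman : ∀ s, V s = r s + γ * ∫ s', V s' ∂(P s))
    (Vb : Sb → ℝ)
    (hVbbellman : ∀ x, Vb x = rb x + γ * ∑ y, ((Pb x) y).toReal * Vb y)
    (K : ℝ) (hK : ∀ x y, |Vb x - Vb y| ≤ K) :
    ∫ s, |V s - Vb (φ s)| ∂ξ ≤
      ((∫ s, |r s - rb (φ s)| ∂ξ) +
        γ * K * (∫ s, tvDist ((P s).map φ) ((Pb (φ s)).toMeasure) ∂ξ)) / (1 - γ) := by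
  obtain ⟨CV, hCV⟩ := hVbdd
  obtain ⟨Cr, hCr⟩ := hrbdd
  have hξ : P.Invariant ξ := by
    refine Measure.ext fun A hA => ?_
    rw [Measure.bind_apply hA P.aemeasurable, hinv A hA]
  have hV (μ : Measure S) [IsFiniteMeasure μ] : Integrable V μ :=
    .of_bound hVmeas.aestronglyMeasurable CV (ae_of_all _ hCV)
  have hr : Integrable (fun s => |r s - rb (φ s)|) ξ :=
    ((Integrable.of_bound hrmeas.aestronglyMeasurable Cr (ae_of_all _ hCr)).sub
      (Integrable.of_finite.comp_measurable hφ)).abs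
  have (s : S) : IsProbabilityMeasure ((P s).map φ) :=
    Measure.isProbabilityMeasure_map hφ.aemeasurable
  have htv : Integrable (fun s => tvDist ((P s).map φ) (Pb (φ s)).toMeasure) ξ :=
    integrable_tvDist ((Measure.measurable_map φ hφ).comp P.measurable)
      ((Measurable.of_discrete (f := fun x => (Pb x).toMeasure)).comp hφ)
  have hstep (s : S) : |V s - Vb (φ s)| ≤ (|r s - rb (φ s)| + γ * K *
      tvDist ((P s).map φ) (Pb (φ s)).toMeasure) + γ * ∫ x, |V x - Vb (φ x)| ∂P s := by
    rw [hVbellman, hVbbellman]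
    simp only [← smul_eq_mul (a := ((Pb _) _).toReal), ← PMF.integral_eq_sum]
    exact abs_add_mul_integral_sub_add_mul_integral_le (P s) _ hφ (hV _) hK hγ0 _ _
  calc ∫ s, |V s - Vb (φ s)| ∂ξ
      ≤ (∫ s, (|r s - rb (φ s)| + γ * K * tvDist ((P s).map φ) (Pb (φ s)).toMeasure) ∂ξ)
          / (1 - γ) :=
        hξ.integral_le_div_one_sub hγ1 ((hV ξ).sub (Integrable.of_finite.comp_measurable hφ)).abs
          (hr.add (htv.const_mul _)) hstep
    _ = _ := by rw [integral_add hr (htv.const_mul _), integral_const_mul]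

/-- Value-difference bound for discounted return: if the latent value function `Vb` is
`K`-Lipschitz-valued for the discrete metric on the latent space, then the expected (under the
stationary distribution `ξ`) absolute difference between the ground value function `V` and
`Vb ∘ φ` is at most `(L_R + γ·K·L_P)/(1-γ)`, where `L_R` and `L_P` are the local reward and
transition losses. -/
theorem value_difference_return
    {S : Type*} [MeasurableSpace S]
    {Sb : Type*} [Fintype Sb] [Nonempty Sb] [MeasurableSpace Sb] [DiscreteMeasurableSpace Sb]
    (P : Kernel S S) [IsMarkovKernel P]
    (Pb : Sb → PMF Sb)
    (φ : S → Sb) (hφ : Measurable φ)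
    (ξ : Measure S) [IsProbabilityMeasure ξ]
    (hinv : ∀ A : Set S, MeasurableSet A → ξ A = ∫⁻ s, P s A ∂ξ)
    (γ : ℝ) (hγ0 : 0 ≤ γ) (hγ1 : γ < 1)
    (r : S → ℝ) (hrmeas : Measurable r) (hrbdd : ∃ C, ∀ s, |r s| ≤ C)
    (rb : Sb → ℝ)
    (V : S → ℝ) (hVmeas : Measurable V) (hVbdd : ∃ C, ∀ s, |V s| ≤ C)
    (hVbellman : ∀ s, V s = r s + γ * ∫ s', V s' ∂(P s))
    (Vb : Sb → ℝ)
    (hVbbellman : ∀ x, Vb x = rb x + γ * ∑ y, ((Pb x) y).toReal * Vb y)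
    (K : ℝ) (hK : ∀ x y, |Vb x - Vb y| ≤ K) :
    ∫ s, |V s - Vb (φ s)| ∂ξ ≤
      ((∫ s, |r s - rb (φ s)| ∂ξ) +
        γ * K * (∫ s, tvDist ((P s).map φ) ((Pb (φ s)).toMeasure) ∂ξ)) / (1 - γ) :=
  value_difference_return_general P Pb φ hφ ξ hinv γ hγ0 hγ1 r hrmeas hrbdd rb V hVmeas hVbdd
    hVbellman Vb hVbbellman K hK
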